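/- arXiv:math/0103197 — 3 statements merged into one kernel-verified Lean document; each statement's English description precedes it below -/
import Mathlib

section
/- Let K be a field, R = K[x_0,…,x_n], and let I_1 ⊇ I_2 ⊇ ⋯ ⊇ I_r be homogeneous ideals of R. Let F_1,…,F_r ∈ R be homogeneous elements with deg F_i = d_i such that I_i :_R (F_i) = I_i for each i. Define J_1 := I_1 + (F_1) and J_k := I_k + F_k·J_{k−1} for 2 ≤ k ≤ r, so that J_r = I_r + F_r·I_{r−1} + F_rF_{r−1}·I_{r−2} + ⋯ + F_r⋯F_2·I_1 + (F_r F_{r−1}⋯F_1). Then for every integer t, h_{R/J_r}(t) = Σ_{i=1}^{r} h_{R/(I_i + (F_i))}(t − d_r − d_{r−1} − ⋯ − d_{i+1}) (the shift being 0 for i = r). -/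
open MvPolynomial

/-- An ideal of a polynomial ring is homogeneous (with respect to the standard grading)
if it contains all homogeneous components of each of its elements. -/
def Ideal.IsStdHomogeneous {K : Type} [Field K] {n : ℕ}
    (I : Ideal (MvPolynomial (Fin (n + 1)) K)) : Prop :=
  ∀ p ∈ I, ∀ i : ℕ, MvPolynomial.homogeneousComponent i p ∈ I

/-- The Hilbert function of `R/I`:  `h_{R/I}(t)` is the `K`-dimension of the degree `t`
graded component of `R/I`; it is `0` in negative degrees. -/
noncomputable def hilbertFn {K : Type} [Field K] {n : ℕ}
    (I : Ideal (MvPolynomial (Fin (n + 1)) K)) (t : ℤ) : ℕ :=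
  if t < 0 then 0
  else
    Module.finrank K
      ((MvPolynomial.homogeneousSubmodule (Fin (n + 1)) K t.toNat) ⧸
        Submodule.comap (MvPolynomial.homogeneousSubmodule (Fin (n + 1)) K t.toNat).subtype
          (Submodule.restrictScalars K I))

/-!
Multiplication by a form `F` of degree `d` gives the exact sequence of graded modules
`0 → (R/(C : F))(-d) → R/C → R/(C + (F)) → 0`, so
`h_{R/C}(t) = h_{R/(C+(F))}(t) + h_{R/(C:F)}(t - d)` for every homogeneous ideal `C`.
For `C = J_k = I_k + F_k J_{k-1}` we have `J_k + (F_k) = I_k + (F_k)` and, since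
`I_k : F_k = I_k ⊆ I_{k-1} ⊆ J_{k-1}`, also `J_k : F_k = J_{k-1}`. Hence
`h_{R/J_k}(t) = h_{R/(I_k+(F_k))}(t) + h_{R/J_{k-1}}(t - d_k)`, and the formula follows by
induction on `k`.
-/

theorem Submodule.finrank_quotient_eq_finrank_quotient_sup_range_add {K V W : Type*}
    [DivisionRing K] [AddCommGroup V] [Module K V] [AddCommGroup W] [Module K W]
    [FiniteDimensional K V] (C : Submodule K V) (f : W →ₗ[K] V) :
    Module.finrank K (V ⧸ C) =
      Module.finrank K (V ⧸ C ⊔ LinearMap.range f) + Module.finrank K (W ⧸ C.comap f) := by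
  set g := C.mkQ ∘ₗ f
  have hker : LinearMap.ker g = C.comap f := by
    rw [LinearMap.ker_comp, Submodule.ker_mkQ]
  calc Module.finrank K (V ⧸ C)
      = Module.finrank K ((V ⧸ C) ⧸ LinearMap.range g) + Module.finrank K (LinearMap.range g) :=
        (Submodule.finrank_quotient_add_finrank _).symm
    _ = _ := by
      rw [← g.quotKerEquivRange.finrank_eq, hker, LinearMap.range_comp,
        (Submodule.quotientQuotientEquivQuotientSup C _).finrank_eq]

namespace Ideal

variable {R : Type*} [CommRing R] {A B : Ideal R} {F : R}

theorem sup_span_singleton_mul_sup_span_singleton :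
    A ⊔ span {F} * B ⊔ span {F} = A ⊔ span {F} := by
  rw [sup_assoc, sup_eq_right.2 (Ideal.mul_le_left : span {F} * B ≤ span {F})]

theorem colon_sup_span_singleton_mul (hA : A.colon (span {F}) = A) (hAB : A ≤ B) :
    (A ⊔ span {F} * B).colon (span {F}) = B := by
  refine le_antisymm (fun x hx => ?_) fun b hb =>
    mem_colon_span_singleton.2
      (mem_sup_right (mul_comm b F ▸ mul_mem_mul (mem_span_singleton_self F) hb))
  obtain ⟨a, ha, p, hp, hap⟩ := Submodule.mem_sup.1 (mem_colon_span_singleton.1 hx)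
  obtain ⟨b, hb, rfl⟩ := mem_span_singleton_mul.1 hp
  have hxb : x - b ∈ A := by
    rw [← hA, mem_colon_span_singleton]
    convert ha using 1
    linear_combination -hap
  simpa using add_mem (hAB hxb) hb

end Ideal

attribute [local instance] MvPolynomial.gradedAlgebra

namespace MvPolynomial

section CommRing

variable {σ R : Type*} [CommRing R]

theorem homogeneousComponent_mul_of_isHomogeneous {F : MvPolynomial σ R} {d : ℕ}
    (hF : F.IsHomogeneous d) (g : MvPolynomial σ R) (t : ℕ) :
    homogeneousComponent t (F * g) = if d ≤ t then F * homogeneousComponent (t - d) g else 0 := by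
  simpa only [DirectSum.decompose, Equiv.coe_fn_mk, decomposition.decompose'_apply] using
    DirectSum.coe_decompose_mul_of_left_mem (homogeneousSubmodule σ R) (b := g) t hF

theorem homogeneousComponent_mul_homogeneousComponent_sub {F : MvPolynomial σ R} {d : ℕ}
    (hF : F.IsHomogeneous d) (g : MvPolynomial σ R) (t : ℕ) :
    homogeneousComponent t (F * homogeneousComponent (t - d) g) =
      homogeneousComponent t (F * g) := by
  simp only [homogeneousComponent_mul_of_isHomogeneous hF,
    homogeneousComponent_of_mem (homogeneousComponent_mem (t - d) g), ↓reduceIte]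

theorem isHomogeneous_span_singleton {F : MvPolynomial σ R} {d : ℕ} (hF : F.IsHomogeneous d) :
    (Ideal.span {F}).IsHomogeneous (homogeneousSubmodule σ R) :=
  Ideal.homogeneous_span _ _ fun _ hx => ⟨d, (Set.mem_singleton_iff.1 hx) ▸ hF⟩

end CommRing

variable {σ K : Type*} [Field K]

instance [Finite σ] (t : ℕ) : FiniteDimensional K (homogeneousSubmodule σ K t) :=
  have hle : homogeneousSubmodule σ K t ≤ restrictTotalDegree σ K t :=
    fun _ hp => (mem_restrictTotalDegree _ _ _).2 (IsHomogeneous.totalDegree_le hp)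
  Module.Finite.equiv (Submodule.comapSubtypeEquivOfLe hle)

/-- For `F` of degree `d` and `s = t - d` (truncated), this is `w ↦ F * w` when `d ≤ t` and `0`
when `t < d`. -/
noncomputable def mulComponent (F : MvPolynomial σ K) (s t : ℕ) :
    homogeneousSubmodule σ K s →ₗ[K] homogeneousSubmodule σ K t :=
  LinearMap.codRestrict _
    ((homogeneousComponent t).comp
      ((LinearMap.mulLeft K F).comp (homogeneousSubmodule σ K s).subtype))
    fun _ => homogeneousComponent_mem _ _

theorem coe_mulComponent (F : MvPolynomial σ K) (s t : ℕ) (w : homogeneousSubmodule σ K s) :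
    (mulComponent F s t w : MvPolynomial σ K) =
      homogeneousComponent t (F * (w : MvPolynomial σ K)) :=
  rfl

theorem mulComponent_eq_zero {F : MvPolynomial σ K} {d : ℕ} (hF : F.IsHomogeneous d) {t : ℕ}
    (ht : t < d) (s : ℕ) : mulComponent F s t = 0 := by
  ext w
  simp [coe_mulComponent, homogeneousComponent_mul_of_isHomogeneous hF, Nat.not_le.2 ht]

end MvPolynomial

namespace Ideal

variable {σ K : Type*} [Field K]

noncomputable def gradedPiece (I : Ideal (MvPolynomial σ K)) (t : ℕ) :
    Submodule K (homogeneousSubmodule σ K t) :=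
  (I.restrictScalars K).comap (homogeneousSubmodule σ K t).subtype

theorem mem_gradedPiece {I : Ideal (MvPolynomial σ K)} {t : ℕ}
    {v : homogeneousSubmodule σ K t} :
    v ∈ I.gradedPiece t ↔ (v : MvPolynomial σ K) ∈ I := Iff.rfl

theorem gradedPiece_sup_span_singleton {C : Ideal (MvPolynomial σ K)}
    (hC : C.IsHomogeneous (homogeneousSubmodule σ K)) {F : MvPolynomial σ K} {d : ℕ}
    (hF : F.IsHomogeneous d) (t : ℕ) :
    (C ⊔ span {F}).gradedPiece t =
      C.gradedPiece t ⊔ LinearMap.range (mulComponent F (t - d) t) := by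
  ext v
  constructor
  · intro hv
    obtain ⟨c, hc, p, hp, hcp⟩ := Submodule.mem_sup.1 (mem_gradedPiece.1 hv)
    obtain ⟨g, rfl⟩ := mem_span_singleton.1 hp
    refine Submodule.mem_sup.2 ⟨⟨_, homogeneousComponent_mem t c⟩,
      homogeneousComponent_mem_of_mem hC hc t, _,
      ⟨⟨_, homogeneousComponent_mem (t - d) g⟩, rfl⟩, ?_⟩
    ext1
    rw [Submodule.coe_add, coe_mulComponent, homogeneousComponent_mul_homogeneousComponent_sub hF,
      ← map_add, hcp, homogeneousComponent_of_mem v.2, if_pos rfl]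
  · intro hv
    obtain ⟨c, hc, _, ⟨w, rfl⟩, rfl⟩ := Submodule.mem_sup.1 hv
    refine add_mem (mem_sup_left (mem_gradedPiece.1 hc)) (mem_sup_right ?_)
    exact homogeneousComponent_mem_of_mem (isHomogeneous_span_singleton hF)
      (mem_span_singleton.2 (dvd_mul_right F w)) t

theorem comap_mulComponent_gradedPiece (C : Ideal (MvPolynomial σ K)) {F : MvPolynomial σ K}
    {d : ℕ} (hF : F.IsHomogeneous d) {t : ℕ} (hdt : d ≤ t) :
    (C.gradedPiece t).comap (mulComponent F (t - d) t) =
      (C.colon (span {F})).gradedPiece (t - d) := by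
  ext w
  have hFw : F * (w : MvPolynomial σ K) ∈ homogeneousSubmodule σ K t :=
    (mem_homogeneousSubmodule _ _).2 (by simpa only [Nat.add_sub_cancel' hdt] using hF.mul w.2)
  rw [Submodule.mem_comap, mem_gradedPiece, mem_gradedPiece, coe_mulComponent,
    homogeneousComponent_of_mem hFw, if_pos rfl, mem_colon_span_singleton, mul_comm]

end Ideal

section HilbertFunction

variable {K : Type} [Field K] {n : ℕ}

theorem Ideal.IsStdHomogeneous.isHomogeneous {I : Ideal (MvPolynomial (Fin (n + 1)) K)}
    (hI : I.IsStdHomogeneous) : I.IsHomogeneous (homogeneousSubmodule (Fin (n + 1)) K) :=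
  fun i p hp => by
    simpa only [DirectSum.decompose, Equiv.coe_fn_mk, decomposition.decompose'_apply] using
      hI p hp i

theorem hilbertFn_of_neg (I : Ideal (MvPolynomial (Fin (n + 1)) K)) {t : ℤ} (ht : t < 0) :
    hilbertFn I t = 0 :=
  if_pos ht

theorem hilbertFn_natCast (I : Ideal (MvPolynomial (Fin (n + 1)) K)) (t : ℕ) :
    hilbertFn I t = Module.finrank K (homogeneousSubmodule (Fin (n + 1)) K t ⧸ I.gradedPiece t) :=
  if_neg (Int.natCast_nonneg t).not_gt

theorem hilbertFn_eq_hilbertFn_sup_span_singleton_add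
    {C : Ideal (MvPolynomial (Fin (n + 1)) K)}
    (hC : C.IsHomogeneous (homogeneousSubmodule (Fin (n + 1)) K))
    {F : MvPolynomial (Fin (n + 1)) K} {d : ℕ} (hF : F.IsHomogeneous d) (t : ℤ) :
    hilbertFn C t =
      hilbertFn (C ⊔ Ideal.span {F}) t + hilbertFn (C.colon (Ideal.span {F})) (t - d) := by
  rcases lt_or_ge t 0 with ht | ht
  · simp only [hilbertFn_of_neg _ ht, hilbertFn_of_neg _ (by omega : t - d < 0)]
  obtain ⟨m, rfl⟩ := Int.eq_ofNat_of_zero_le ht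
  rw [hilbertFn_natCast, hilbertFn_natCast, Ideal.gradedPiece_sup_span_singleton hC hF,
    Submodule.finrank_quotient_eq_finrank_quotient_sup_range_add _ (mulComponent F (m - d) m)]
  congr 1
  rcases le_or_gt d m with hdm | hdm
  · rw [Ideal.comap_mulComponent_gradedPiece C hF hdm, ← hilbertFn_natCast, Nat.cast_sub hdm]
  · rw [mulComponent_eq_zero hF hdm, Submodule.comap_zero, hilbertFn_of_neg _ (by omega),
      Module.finrank_zero_of_subsingleton]

theorem hilbertFn_sup_span_singleton_mul {A B : Ideal (MvPolynomial (Fin (n + 1)) K)}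
    (hA : A.IsHomogeneous (homogeneousSubmodule (Fin (n + 1)) K))
    (hB : B.IsHomogeneous (homogeneousSubmodule (Fin (n + 1)) K))
    {F : MvPolynomial (Fin (n + 1)) K} {d : ℕ} (hF : F.IsHomogeneous d)
    (hcolon : A.colon (Ideal.span {F}) = A) (hAB : A ≤ B) (t : ℤ) :
    hilbertFn (A ⊔ Ideal.span {F} * B) t =
      hilbertFn (A ⊔ Ideal.span {F}) t + hilbertFn B (t - d) := by
  have hC := hA.sup ((isHomogeneous_span_singleton hF).mul hB)
  rw [hilbertFn_eq_hilbertFn_sup_span_singleton_add hC hF,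
    Ideal.sup_span_singleton_mul_sup_span_singleton, Ideal.colon_sup_span_singleton_mul hcolon hAB]

end HilbertFunction

theorem Finset.sum_Icc_succ_sub_sum_Icc {M : Type*} [AddCommMonoid M] (f : ℕ → ℤ → M)
    (d : ℕ → ℤ) (t : ℤ) (k : ℕ) :
    ∑ i ∈ Icc 1 (k + 1), f i (t - ∑ j ∈ Icc (i + 1) (k + 1), d j) =
      ∑ i ∈ Icc 1 k, f i (t - d (k + 1) - ∑ j ∈ Icc (i + 1) k, d j) + f (k + 1) t := by
  rw [sum_Icc_succ_top (by omega), Icc_eq_empty_of_lt (Nat.lt_succ_self _), sum_empty, sub_zero]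
  refine congrArg (· + _) (sum_congr rfl fun i hi => ?_)
  rw [sum_Icc_succ_top (by linarith [(mem_Icc.1 hi).2]), sub_add_eq_sub_sub_swap]

/-- Corollary 3.5(iv) :  given a flag `I_1 ⊇ I_2 ⊇ ⋯ ⊇ I_r` of homogeneous ideals and
homogeneous elements `F_i` of degree `d_i` with `I_i : (F_i) = I_i`, setting
`J_1 = I_1 + (F_1)` and `J_k = I_k + F_k·J_{k−1}`, the Hilbert functions satisfy
`h_{R/J_r}(t) = Σ_{i=1}^{r} h_{R/(I_i + (F_i))}(t − d_r − d_{r−1} − ⋯ − d_{i+1})`. -/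
theorem hilbert_function_of_union_of_hypersurface_sections {K : Type} [Field K] {n : ℕ}
    (r : ℕ) (hr : 1 ≤ r)
    (I : ℕ → Ideal (MvPolynomial (Fin (n + 1)) K))
    (hIhom : ∀ i, 1 ≤ i → i ≤ r → (I i).IsStdHomogeneous)
    (hchain : ∀ i, 1 ≤ i → i < r → I (i + 1) ≤ I i)
    (F : ℕ → MvPolynomial (Fin (n + 1)) K) (d : ℕ → ℕ)
    (hF : ∀ i, 1 ≤ i → i ≤ r → (F i).IsHomogeneous (d i))
    (hcolon : ∀ i, 1 ≤ i → i ≤ r → Submodule.colon (I i) (Ideal.span {F i}) = I i)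
    (J : ℕ → Ideal (MvPolynomial (Fin (n + 1)) K))
    (hJ1 : J 1 = I 1 ⊔ Ideal.span {F 1})
    (hJk : ∀ k, 2 ≤ k → k ≤ r → J k = I k ⊔ Ideal.span {F k} * J (k - 1)) :
    ∀ t : ℤ,
      hilbertFn (J r) t =
        ∑ i ∈ Finset.Icc 1 r,
          hilbertFn (I i ⊔ Ideal.span {F i})
            (t - ∑ j ∈ Finset.Icc (i + 1) r, (d j : ℤ)) := by
  have hIJ : ∀ k, 1 ≤ k → k ≤ r → I k ≤ J k := fun k hk hkr => by
    rcases hk.eq_or_lt with rfl | hk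
    · exact hJ1 ▸ le_sup_left
    · exact hJk k hk hkr ▸ le_sup_left
  suffices ∀ k, 1 ≤ k → k ≤ r →
      (J k).IsHomogeneous (homogeneousSubmodule (Fin (n + 1)) K) ∧
      ∀ t : ℤ, hilbertFn (J k) t = ∑ i ∈ Finset.Icc 1 k,
        hilbertFn (I i ⊔ Ideal.span {F i}) (t - ∑ j ∈ Finset.Icc (i + 1) k, (d j : ℤ)) from
    (this r hr le_rfl).2
  intro k hk
  induction k, hk using Nat.le_induction with
  | base =>
    intro h1r
    refine ⟨hJ1 ▸ (hIhom 1 le_rfl h1r).isHomogeneous.sup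
      (isHomogeneous_span_singleton (hF 1 le_rfl h1r)), fun t => ?_⟩
    simp [hJ1]
  | succ k hk ih =>
    intro hkr
    obtain ⟨hJhom, hJsum⟩ := ih (by omega)
    have hJk' : J (k + 1) = I (k + 1) ⊔ Ideal.span {F (k + 1)} * J k :=
      hJk (k + 1) (by omega) hkr
    have hIhom' := (hIhom (k + 1) (by omega) hkr).isHomogeneous
    have hFk := hF (k + 1) (by omega) hkr
    refine ⟨hJk' ▸ hIhom'.sup ((isHomogeneous_span_singleton hFk).mul hJhom), fun t => ?_⟩
    rw [hJk', hilbertFn_sup_span_singleton_mul hIhom' hJhom hFk (hcolon (k + 1) (by omega) hkr)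
      ((hchain k hk (by omega)).trans (hIJ k hk (by omega))), hJsum, add_comm,
      Finset.sum_Icc_succ_sub_sum_Icc]
end

section
/- Let c ≥ 1, t ≥ 0, s ≥ 2t be integers and suppose every (c+2)-element subset of the set N_{c,s,t} of s+c linear forms generates a complete intersection of codimension c+2 (is linearly independent over K). Then G_{c,s,t} is a generalized stick figure: for any three pairwise distinct ideals P_1, P_2, P_3 occurring as components in the defining intersection of I_{G_{c,s,t}}, the ideal P_1 + P_2 + P_3 has height at least c+2; equivalently, at least c+2 distinct linear forms of N_{c,s,t} occur among the 3c listed generators of P_1, P_2, P_3. -/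
/-
Write `M_k` as the label `2k` and `L_k` as `2k + 1` (`Equiv.natSumNatEquivNat`). A component
becomes a strictly increasing sequence of `c` labels, the chains `i_1 ≤ i_2 < i_3 ≤ ⋯` becoming
strict inequalities between labels of alternating parity. Distinct labels of `N_{c,s,t}` give
distinct forms, so it suffices that the label sets of three distinct components have at least
`c + 2` elements in their union. Otherwise the union is `u_0 < ⋯ < u_c` and each component omits
one `u_j`. For types `A` and `B` the parity of `u_q + q` then switches exactly at the omitted
index `j`, for type `C` the same holds for `q < c`; three switches at distinct indices are
impossible. The last label of a type-`C` component is at least `2t + c`, while all labels of type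
`A` and `B` are smaller, which rules out the mixed configurations.
-/

open MvPolynomial

namespace GorensteinSI

/-- The linear form at position `p` (0-based) in a component of type `A`/`A′` or `C`:
the forms alternate `M, L, M, L, …` starting with `M`. -/
noncomputable def formA {K : Type} [Field K] {n : ℕ}
    (M L : ℕ → MvPolynomial (Fin (n + 1)) K) (p idx : ℕ) :
    MvPolynomial (Fin (n + 1)) K :=
  if p % 2 = 0 then M idx else L idx

/-- The linear form at position `p` (0-based) in a component of type `B`/`B′`:
the forms alternate `L, M, L, M, …` starting with `L`. -/
noncomputable def formB {K : Type} [Field K] {n : ℕ}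
    (M L : ℕ → MvPolynomial (Fin (n + 1)) K) (p idx : ℕ) :
    MvPolynomial (Fin (n + 1)) K :=
  if p % 2 = 0 then L idx else M idx

/-- The linear form at position `p` (0-based) in a component of type `C`/`C′`: as in
type `A`, except that the last form (position `c−1`) is always an `L` (for even `c` this
agrees with the alternating pattern). -/
noncomputable def formC {K : Type} [Field K] {n : ℕ}
    (M L : ℕ → MvPolynomial (Fin (n + 1)) K) (c p idx : ℕ) :
    MvPolynomial (Fin (n + 1)) K :=
  if p + 1 = c then L idx else formA M L p idx

/-- Admissible index vectors for components of type `A` (c even) resp. `A′` (c odd):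
`0 ≤ i_1 ≤ i_2 < i_3 ≤ i_4 < ⋯` with `i_c ≤ t + ⌊(c−1)/2⌋` (in natural division this
single bound covers both parities). -/
def admissA (c t : ℕ) (i : ℕ → ℕ) : Prop :=
  (∀ p, p + 1 < c → (if p % 2 = 0 then i p ≤ i (p + 1) else i p < i (p + 1))) ∧
    (i (c - 1) : ℤ) ≤ (t : ℤ) + ((c : ℤ) - 1).fdiv 2

/-- Admissible index vectors for components of type `B` (c even) resp. `B′` (c odd):
`0 ≤ i_1 < i_2 ≤ i_3 < ⋯` with `i_c ≤ t + ⌊(c−2)/2⌋` (covering both parities). -/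
def admissB (c t : ℕ) (i : ℕ → ℕ) : Prop :=
  (∀ p, p + 1 < c → (if p % 2 = 0 then i p < i (p + 1) else i p ≤ i (p + 1))) ∧
    (i (c - 1) : ℤ) ≤ (t : ℤ) + ((c : ℤ) - 2).fdiv 2

/-- Admissible index vectors for components of type `C` (c even) resp. `C′` (c odd):
`0 ≤ i_1 ≤ i_2 < i_3 ≤ ⋯` among the first `c−1` indices, with `i_{c−1} ≤ t + ⌊(c−2)/2⌋`,
and `t + ⌊c/2⌋ ≤ i_c ≤ s − t + ⌊(c−2)/2⌋` (in natural division these bounds cover both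
parities). -/
def admissC (c s t : ℕ) (i : ℕ → ℕ) : Prop :=
  (∀ p, p + 2 < c → (if p % 2 = 0 then i p ≤ i (p + 1) else i p < i (p + 1))) ∧
    (2 ≤ c → (i (c - 2) : ℤ) ≤ (t : ℤ) + ((c : ℤ) - 2).fdiv 2) ∧
    (t : ℤ) + (c : ℤ).fdiv 2 ≤ (i (c - 1) : ℤ) ∧
    (i (c - 1) : ℤ) ≤ (s : ℤ) - (t : ℤ) + ((c : ℤ) - 2).fdiv 2

/-- The generators of the type-`A` component with index vector `i`. -/
noncomputable def gensA {K : Type} [Field K] {n : ℕ}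
    (M L : ℕ → MvPolynomial (Fin (n + 1)) K) (c : ℕ) (i : ℕ → ℕ) :
    Set (MvPolynomial (Fin (n + 1)) K) :=
  {q | ∃ p < c, q = formA M L p (i p)}

/-- The generators of the type-`B` component with index vector `i`. -/
noncomputable def gensB {K : Type} [Field K] {n : ℕ}
    (M L : ℕ → MvPolynomial (Fin (n + 1)) K) (c : ℕ) (i : ℕ → ℕ) :
    Set (MvPolynomial (Fin (n + 1)) K) :=
  {q | ∃ p < c, q = formB M L p (i p)}

/-- The generators of the type-`C` component with index vector `i`. -/
noncomputable def gensC {K : Type} [Field K] {n : ℕ}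
    (M L : ℕ → MvPolynomial (Fin (n + 1)) K) (c : ℕ) (i : ℕ → ℕ) :
    Set (MvPolynomial (Fin (n + 1)) K) :=
  {q | ∃ p < c, q = formC M L c p (i p)}

/-- `P` is a component of `G_{c,s,t}`, with generating set `G` of linear forms. -/
def IsGComponent {K : Type} [Field K] {n : ℕ}
    (M L : ℕ → MvPolynomial (Fin (n + 1)) K) (c s t : ℕ)
    (P : Ideal (MvPolynomial (Fin (n + 1)) K))
    (G : Set (MvPolynomial (Fin (n + 1)) K)) : Prop :=
  (∃ i, admissA c t i ∧ G = gensA M L c i ∧ P = Ideal.span G) ∨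
    (∃ i, admissB c t i ∧ G = gensB M L c i ∧ P = Ideal.span G) ∨
    (∃ i, admissC c s t i ∧ G = gensC M L c i ∧ P = Ideal.span G)

/-- Membership in `N_{c,s,t} = {M_0,…,M_{t+⌊(c−1)/2⌋}, L_0,…,L_{s−t+⌊(c−2)/2⌋}}`,
encoded by indices: `Sum.inl k` stands for `M_k` and `Sum.inr k` for `L_k`. -/
def validNcst (c s t : ℕ) : ℕ ⊕ ℕ → Prop :=
  fun x => match x with
    | Sum.inl k => (k : ℤ) ≤ (t : ℤ) + ((c : ℤ) - 1).fdiv 2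
    | Sum.inr k => (k : ℤ) ≤ (s : ℤ) - (t : ℤ) + ((c : ℤ) - 2).fdiv 2

open Set

theorem strictMonoOn_Iio_of_lt_succ {c : ℕ} {v : ℕ → ℕ} (h : ∀ p, p + 1 < c → v p < v (p + 1)) :
    StrictMonoOn v (Iio c) := by
  refine (strictMonoOn_Iic_of_lt_succ (n := c - 1) fun p hp => ?_).mono fun p hp => ?_
  · simpa using h p (by omega)
  · simp only [mem_Iio, mem_Iic] at hp ⊢; omega

theorem card_image_range_of_strictMonoOn {c : ℕ} {v : ℕ → ℕ} (hv : StrictMonoOn v (Iio c)) :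
    ((Finset.range c).image v).card = c := by
  rw [Finset.card_image_of_injOn (by simpa using hv.injOn), Finset.card_range]

theorem eqOn_of_strictMonoOn_of_mapsTo {α : Type*} [LinearOrder α] {c : ℕ} {v w : ℕ → α}
    {E : Finset α} (hE : E.card = c) (hv : StrictMonoOn v (Iio c))
    (hw : StrictMonoOn w (Iio c)) (hvE : MapsTo v (Iio c) E) (hwE : MapsTo w (Iio c) E) :
    EqOn v w (Iio c) := by
  have enum {f : ℕ → α} (hf : StrictMonoOn f (Iio c)) (hfE : MapsTo f (Iio c) E) :
      (fun p : Fin c => f p) = E.orderEmbOfFin hE :=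
    Finset.orderEmbOfFin_unique hE (fun p => hfE p.isLt) (fun p q hpq => hf p.isLt q.isLt hpq)
  intro p hp
  exact congrFun ((enum hv hvE).trans (enum hw hwE).symm) ⟨p, hp⟩

theorem injOn_of_linearIndependent_pair {K V ι : Type*} [Ring K] [Nontrivial K]
    [AddCommGroup V] [Module K V] {f : ι → V} {N : Set ι}
    (h : ∀ S : Finset ι, ↑S ⊆ N → S.card ≤ 2 → LinearIndependent K (fun j : S => f j)) :
    InjOn f N := by
  classical
  intro a ha b hb hab
  have := (h {a, b} (by simp [Set.insert_subset_iff, ha, hb]) Finset.card_le_two).injective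
    (a₁ := ⟨a, by simp⟩) (a₂ := ⟨b, by simp⟩) hab
  simpa using this

theorem fdiv_two (x : ℤ) : x.fdiv 2 = x / 2 := Int.fdiv_eq_ediv_of_nonneg x (by norm_num)

theorem natSumNatEquivNat_symm_two_mul (k : ℕ) :
    Equiv.natSumNatEquivNat.symm (2 * k) = .inl k :=
  (Equiv.symm_apply_eq _).2 (by simp)

theorem natSumNatEquivNat_symm_two_mul_add_one (k : ℕ) :
    Equiv.natSumNatEquivNat.symm (2 * k + 1) = .inr k :=
  (Equiv.symm_apply_eq _).2 (by simp)

def labelForm {R : Type*} (M L : ℕ → R) (x : ℕ) : R :=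
  Sum.elim M L (Equiv.natSumNatEquivNat.symm x)

def labelSeqA (i : ℕ → ℕ) (p : ℕ) : ℕ := 2 * i p + p % 2

def labelSeqB (i : ℕ → ℕ) (p : ℕ) : ℕ := 2 * i p + (p + 1) % 2

def labelSeqC (c : ℕ) (i : ℕ → ℕ) (p : ℕ) : ℕ := 2 * i p + if p + 1 = c then 1 else p % 2

section labelForm

variable {K : Type} [Field K] {n c p : ℕ} {i : ℕ → ℕ} {M L : ℕ → MvPolynomial (Fin (n + 1)) K}

theorem labelForm_labelSeqA : labelForm M L (labelSeqA i p) = formA M L p (i p) := by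
  rcases Nat.mod_two_eq_zero_or_one p with h | h <;>
    simp [labelForm, labelSeqA, formA, h]

theorem labelForm_labelSeqB : labelForm M L (labelSeqB i p) = formB M L p (i p) := by
  rcases Nat.mod_two_eq_zero_or_one p with h | h <;>
    simp [labelForm, labelSeqB, formB, h, Nat.add_mod]

theorem labelForm_labelSeqC : labelForm M L (labelSeqC c i p) = formC M L c p (i p) := by
  by_cases hc : p + 1 = c
  · simp [labelForm, labelSeqC, formC, hc]
  · simpa [labelSeqC, labelSeqA, formC, hc] using labelForm_labelSeqA

theorem gensA_eq_image :
    gensA M L c i = labelForm M L '' ↑((Finset.range c).image (labelSeqA i)) := by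
  ext; simp [gensA, labelForm_labelSeqA, eq_comm]

theorem gensB_eq_image :
    gensB M L c i = labelForm M L '' ↑((Finset.range c).image (labelSeqB i)) := by
  ext; simp [gensB, labelForm_labelSeqB, eq_comm]

theorem gensC_eq_image :
    gensC M L c i = labelForm M L '' ↑((Finset.range c).image (labelSeqC c i)) := by
  ext; simp [gensC, labelForm_labelSeqC, eq_comm]

end labelForm

theorem validNcst_natSumNatEquivNat_symm {c s t x : ℕ} (hst : 2 * t ≤ s)
    (h : x + 1 ≤ 2 * t + c ∨ (x % 2 = 1 ∧ x + 1 ≤ 2 * (s - t) + c)) :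
    validNcst c s t (Equiv.natSumNatEquivNat.symm x) := by
  obtain ⟨k, rfl | rfl⟩ := Nat.even_or_odd' x <;>
    simp only [validNcst, fdiv_two, natSumNatEquivNat_symm_two_mul,
      natSumNatEquivNat_symm_two_mul_add_one] <;> omega

structure IsTypeA (c t : ℕ) (v : ℕ → ℕ) : Prop where
  parity : ∀ p < c, v p % 2 = p % 2
  last_le : v (c - 1) + 1 ≤ 2 * t + c

structure IsTypeB (c t : ℕ) (v : ℕ → ℕ) : Prop where
  parity : ∀ p < c, v p % 2 = (p + 1) % 2
  last_le : v (c - 1) + 2 ≤ 2 * t + c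

structure IsTypeC (c s t : ℕ) (v : ℕ → ℕ) : Prop where
  parity : ∀ p < c - 1, v p % 2 = p % 2
  last_odd : v (c - 1) % 2 = 1
  penultimate_le : 2 ≤ c → v (c - 2) + 2 ≤ 2 * t + c
  le_last : 2 * t + c ≤ v (c - 1)
  last_le : v (c - 1) + 1 ≤ 2 * (s - t) + c

def IsTypeAB (c t : ℕ) (v : ℕ → ℕ) : Prop := IsTypeA c t v ∨ IsTypeB c t v

def IsType (c s t : ℕ) (v : ℕ → ℕ) : Prop := IsTypeAB c t v ∨ IsTypeC c s t v

section admiss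

variable {c s t : ℕ} {i : ℕ → ℕ}

theorem admissA.strictMonoOn (h : admissA c t i) : StrictMonoOn (labelSeqA i) (Iio c) :=
  strictMonoOn_Iio_of_lt_succ fun p hp => by
    have := h.1 p hp
    split_ifs at this <;> simp only [labelSeqA] <;> omega

theorem admissB.strictMonoOn (h : admissB c t i) : StrictMonoOn (labelSeqB i) (Iio c) :=
  strictMonoOn_Iio_of_lt_succ fun p hp => by
    have := h.1 p hp
    split_ifs at this <;> simp only [labelSeqB] <;> omega

theorem admissC.strictMonoOn (h : admissC c s t i) : StrictMonoOn (labelSeqC c i) (Iio c) :=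
  strictMonoOn_Iio_of_lt_succ fun p hp => by
    simp only [labelSeqC]
    rcases (show p + 2 < c ∨ p + 2 = c by omega) with hp' | hp'
    · have := h.1 p hp'
      split_ifs at this ⊢ <;> omega
    · have h₁ := h.2.1 (by omega)
      have h₂ := h.2.2.1
      rw [fdiv_two] at h₁ h₂
      rw [show c - 2 = p by omega] at h₁
      rw [show c - 1 = p + 1 by omega] at h₂
      split_ifs <;> omega

theorem admissA.isTypeA (h : admissA c t i) : IsTypeA c t (labelSeqA i) := by
  have := h.2
  rw [fdiv_two] at this
  exact ⟨fun p _ => by simp only [labelSeqA]; omega, by simp only [labelSeqA]; omega⟩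

theorem admissB.isTypeB (hc : 1 ≤ c) (h : admissB c t i) : IsTypeB c t (labelSeqB i) := by
  have := h.2
  rw [fdiv_two] at this
  exact ⟨fun p _ => by simp only [labelSeqB]; omega, by simp only [labelSeqB]; omega⟩

theorem admissC.isTypeC (hc : 1 ≤ c) (h : admissC c s t i) : IsTypeC c s t (labelSeqC c i) := by
  obtain ⟨-, h₂, h₃, h₄⟩ := h
  rw [fdiv_two] at h₂ h₃ h₄
  refine ⟨fun p hp => ?_, ?_, fun hc₂ => ?_, ?_, ?_⟩ <;> simp only [labelSeqC]
  · rw [if_neg (by omega)]; omega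
  all_goals first
    | rw [if_pos (by omega)]; omega
    | have := h₂ hc₂; rw [if_neg (by omega)]; omega

end admiss

theorem IsGComponent.exists_labels {K : Type} [Field K] {n c s t : ℕ}
    {M L : ℕ → MvPolynomial (Fin (n + 1)) K} {P : Ideal (MvPolynomial (Fin (n + 1)) K)}
    {G : Set (MvPolynomial (Fin (n + 1)) K)} (hc : 1 ≤ c) (h : IsGComponent M L c s t P G) :
    ∃ v : ℕ → ℕ, StrictMonoOn v (Iio c) ∧ IsType c s t v ∧
      G = labelForm M L '' ↑((Finset.range c).image v) ∧ P = Ideal.span G := by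
  rcases h with ⟨i, hi, rfl, rfl⟩ | ⟨i, hi, rfl, rfl⟩ | ⟨i, hi, rfl, rfl⟩
  · exact ⟨_, hi.strictMonoOn, .inl (.inl hi.isTypeA), gensA_eq_image, rfl⟩
  · exact ⟨_, hi.strictMonoOn, .inl (.inr (hi.isTypeB hc)), gensB_eq_image, rfl⟩
  · exact ⟨_, hi.strictMonoOn, .inr (hi.isTypeC hc), gensC_eq_image, rfl⟩

theorem IsType.validNcst {c s t : ℕ} {v : ℕ → ℕ} (hst : 2 * t ≤ s) (hc : 1 ≤ c)
    (hv : StrictMonoOn v (Iio c)) (h : IsType c s t v) :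
    ∀ x ∈ (Finset.range c).image v, validNcst c s t (Equiv.natSumNatEquivNat.symm x) := by
  simp only [Finset.mem_image, Finset.mem_range, forall_exists_index, and_imp]
  rintro _ p hp rfl
  refine validNcst_natSumNatEquivNat_symm hst ?_
  have hle {q : ℕ} (hpq : p ≤ q) (hq : q < c) : v p ≤ v q := hv.monotoneOn hp hq hpq
  rcases h with (h | h) | h
  · exact .inl ((hle (q := c - 1) (by omega) (by omega)).trans_lt h.last_le)
  · have := hle (q := c - 1) (by omega) (by omega); have := h.last_le; omega
  · rcases (show p < c - 1 ∨ p = c - 1 by omega) with hp' | rfl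
    · have := hle (q := c - 2) (by omega) (by omega); have := h.penultimate_le (by omega)
      omega
    · exact .inr ⟨h.last_odd, h.last_le⟩

theorem IsType.congr {c s t : ℕ} {v w : ℕ → ℕ} (hc : 1 ≤ c) (h : EqOn v w (Iio c))
    (hv : IsType c s t v) : IsType c s t w := by
  have h₁ : v (c - 1) = w (c - 1) := h (by simp only [mem_Iio]; omega)
  have h₂ : v (c - 2) = w (c - 2) := h (by simp only [mem_Iio]; omega)
  have hp {p : ℕ} (hp : p < c) : v p = w p := h hp
  rcases hv with (⟨hpar, hl⟩ | ⟨hpar, hl⟩) | ⟨hpar, ho, hpl, hl₁, hl₂⟩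
  · exact .inl (.inl ⟨fun p hp' => hp hp' ▸ hpar p hp', h₁ ▸ hl⟩)
  · exact .inl (.inr ⟨fun p hp' => hp hp' ▸ hpar p hp', h₁ ▸ hl⟩)
  · exact .inr ⟨fun p hp' => hp (p := p) (by omega) ▸ hpar p hp', h₁ ▸ ho, h₂ ▸ hpl, h₁ ▸ hl₁,
      h₁ ▸ hl₂⟩

def skip (u : ℕ → ℕ) (j p : ℕ) : ℕ := if p < j then u p else u (p + 1)

def ParitySwitchAt (u : ℕ → ℕ) (m j b : ℕ) : Prop :=
  ∀ q ≤ m, (q < j → (u q + q + b) % 2 = 0) ∧ (j < q → (u q + q + b) % 2 = 1)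

section skip

variable {u : ℕ → ℕ} {c s t m j : ℕ}

theorem skip_of_lt {p : ℕ} (h : p < j) : skip u j p = u p := if_pos h

theorem skip_of_le {p : ℕ} (h : j ≤ p) : skip u j p = u (p + 1) := if_neg (Nat.not_lt.2 h)

theorem skip_sub_one_of_lt {q : ℕ} (h : j < q) : skip u j (q - 1) = u q := by
  rw [skip_of_le (by omega), Nat.sub_add_cancel (by omega)]

theorem paritySwitchAt_of_skip {b : ℕ} (hj : j ≤ m) (h : ∀ p < m, skip u j p % 2 = (p + b) % 2) :
    ParitySwitchAt u m j b := by
  refine fun q hq => ⟨fun hqj => ?_, fun hqj => ?_⟩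
  · have := h q (by omega)
    rw [skip_of_lt hqj] at this
    omega
  · have := h (q - 1) (by omega)
    rw [skip_sub_one_of_lt hqj] at this
    omega

theorem not_paritySwitchAt_three {j₁ j₂ j₃ b₁ b₂ b₃ : ℕ} (h₁₂ : j₁ < j₂) (h₂₃ : j₂ < j₃)
    (h₃ : j₃ ≤ m) (s₁ : ParitySwitchAt u m j₁ b₁) (s₂ : ParitySwitchAt u m j₂ b₂)
    (s₃ : ParitySwitchAt u m j₃ b₃) : False := by
  have := s₁ j₂ (by omega); have := s₁ j₃ h₃
  have := s₂ j₁ (by omega); have := s₂ j₃ h₃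
  have := s₃ j₁ (by omega); have := s₃ j₂ (by omega)
  omega

theorem IsTypeAB.exists_paritySwitchAt (h : IsTypeAB c t (skip u j)) (hj : j ≤ c) :
    ∃ b, ParitySwitchAt u c j b := by
  rcases h with h | h
  · exact ⟨0, paritySwitchAt_of_skip hj h.parity⟩
  · exact ⟨1, paritySwitchAt_of_skip hj h.parity⟩

theorem IsTypeAB.top_add_one_le (h : IsTypeAB c t (skip u j)) (hj : j < c) :
    u c + 1 ≤ 2 * t + c := by
  have hlast : skip u j (c - 1) = u c := skip_sub_one_of_lt hj
  rcases h with h | h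
  · have := h.last_le; omega
  · have := h.last_le; omega

theorem IsTypeC.paritySwitchAt (h : IsTypeC c s t (skip u j)) (hj : j ≤ c - 1) :
    ParitySwitchAt u (c - 1) j 0 :=
  paritySwitchAt_of_skip hj h.parity

theorem IsTypeC.le_top (hu : StrictMonoOn u (Iio (c + 1))) (hc : 1 ≤ c)
    (h : IsTypeC c s t (skip u j)) (hj : j ≤ c) : 2 * t + c ≤ u c := by
  have := h.le_last
  rcases hj.lt_or_eq with hj | hj
  · rwa [skip_sub_one_of_lt hj] at this
  · rw [hj, skip_of_lt (by omega)] at this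
    have := hu.monotoneOn (show c - 1 ∈ Iio (c + 1) by simp only [mem_Iio]; omega)
      (show c ∈ Iio (c + 1) by simp) (by omega)
    omega

theorem eq_of_isTypeAB_skip_of_isTypeC_skip {a d : ℕ} (hu : StrictMonoOn u (Iio (c + 1)))
    (hc : 1 ≤ c) (ha : IsTypeAB c t (skip u a)) (hb : IsTypeC c s t (skip u d)) (hac : a ≤ c)
    (hbc : d ≤ c) : a = c := by
  by_contra hne
  have := ha.top_add_one_le (by omega)
  have := hb.le_top hu hc hbc
  omega

theorem not_isTypeC_skip_isTypeC_skip_isTypeAB_skip_last {a d : ℕ} (hab : a < d) (hbc : d < c)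
    (ha : IsTypeC c s t (skip u a)) (hb : IsTypeC c s t (skip u d))
    (hlast : IsTypeAB c t (skip u c)) : False := by
  obtain ⟨e, hlast⟩ := hlast.exists_paritySwitchAt le_rfl
  have := ha.paritySwitchAt (by omega) d (by omega)
  have := hb.paritySwitchAt (by omega) a (by omega)
  have := hlast a (by omega); have := hlast d (by omega)
  omega

theorem not_isTypeC_skip_three {j₁ j₂ j₃ : ℕ} (h₁₂ : j₁ < j₂) (h₂₃ : j₂ < j₃) (h₃ : j₃ ≤ c)
    (t₁ : IsTypeC c s t (skip u j₁)) (t₂ : IsTypeC c s t (skip u j₂))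
    (t₃ : IsTypeC c s t (skip u j₃)) : False := by
  rcases h₃.lt_or_eq with h₃ | h₃
  · exact not_paritySwitchAt_three h₁₂ h₂₃ (by omega) (t₁.paritySwitchAt (by omega))
      (t₂.paritySwitchAt (by omega)) (t₃.paritySwitchAt (by omega))
  · -- `u (c - 1)` is the penultimate label of the first component and the last of the third
    have h₁ := t₁.penultimate_le (by omega)
    have hlast := t₃.le_last
    rw [skip_of_le (by omega), show c - 2 + 1 = c - 1 by omega] at h₁
    rw [h₃, skip_of_lt (by omega)] at hlast
    omega

theorem not_isType_skip_three_of_lt {j₁ j₂ j₃ : ℕ} (hu : StrictMonoOn u (Iio (c + 1)))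
    (hc : 1 ≤ c) (h₁₂ : j₁ < j₂) (h₂₃ : j₂ < j₃) (h₃ : j₃ ≤ c) (t₁ : IsType c s t (skip u j₁))
    (t₂ : IsType c s t (skip u j₂)) (t₃ : IsType c s t (skip u j₃)) : False := by
  rcases t₁ with t₁ | t₁ <;> rcases t₂ with t₂ | t₂ <;> rcases t₃ with t₃ | t₃
  · obtain ⟨b₁, s₁⟩ := t₁.exists_paritySwitchAt (by omega)
    obtain ⟨b₂, s₂⟩ := t₂.exists_paritySwitchAt (by omega)
    obtain ⟨b₃, s₃⟩ := t₃.exists_paritySwitchAt h₃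
    exact not_paritySwitchAt_three h₁₂ h₂₃ h₃ s₁ s₂ s₃
  · have := eq_of_isTypeAB_skip_of_isTypeC_skip hu hc t₁ t₃ (by omega) h₃; omega
  · have := eq_of_isTypeAB_skip_of_isTypeC_skip hu hc t₁ t₂ (by omega) (by omega); omega
  · have := eq_of_isTypeAB_skip_of_isTypeC_skip hu hc t₁ t₂ (by omega) (by omega); omega
  · have := eq_of_isTypeAB_skip_of_isTypeC_skip hu hc t₂ t₁ (by omega) (by omega); omega
  · have := eq_of_isTypeAB_skip_of_isTypeC_skip hu hc t₂ t₁ (by omega) (by omega); omega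
  · obtain rfl := eq_of_isTypeAB_skip_of_isTypeC_skip hu hc t₃ t₁ h₃ (by omega)
    exact not_isTypeC_skip_isTypeC_skip_isTypeAB_skip_last h₁₂ h₂₃ t₁ t₂ t₃
  · exact not_isTypeC_skip_three h₁₂ h₂₃ h₃ t₁ t₂ t₃

theorem not_isType_skip_three {j₁ j₂ j₃ : ℕ} (hu : StrictMonoOn u (Iio (c + 1))) (hc : 1 ≤ c)
    (h₁ : j₁ ≤ c) (h₂ : j₂ ≤ c) (h₃ : j₃ ≤ c) (h₁₂ : j₁ ≠ j₂) (h₁₃ : j₁ ≠ j₃) (h₂₃ : j₂ ≠ j₃)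
    (t₁ : IsType c s t (skip u j₁)) (t₂ : IsType c s t (skip u j₂))
    (t₃ : IsType c s t (skip u j₃)) : False := by
  have key {a b d : ℕ} (hab : a < b) (hbd : b < d) (hd : d ≤ c) (ta : IsType c s t (skip u a))
      (tb : IsType c s t (skip u b)) (td : IsType c s t (skip u d)) : False :=
    not_isType_skip_three_of_lt hu hc hab hbd hd ta tb td
  have : (j₁ < j₂ ∧ j₂ < j₃) ∨ (j₁ < j₃ ∧ j₃ < j₂) ∨ (j₂ < j₁ ∧ j₁ < j₃) ∨
      (j₂ < j₃ ∧ j₃ < j₁) ∨ (j₃ < j₁ ∧ j₁ < j₂) ∨ (j₃ < j₂ ∧ j₂ < j₁) := by omega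
  rcases this with ⟨ha, hb⟩ | ⟨ha, hb⟩ | ⟨ha, hb⟩ | ⟨ha, hb⟩ | ⟨ha, hb⟩ | ⟨ha, hb⟩
  · exact key ha hb h₃ t₁ t₂ t₃
  · exact key ha hb h₂ t₁ t₃ t₂
  · exact key ha hb h₃ t₂ t₁ t₃
  · exact key ha hb h₁ t₂ t₃ t₁
  · exact key ha hb h₂ t₃ t₁ t₂
  · exact key ha hb h₁ t₃ t₂ t₁

theorem strictMonoOn_skip (hu : StrictMonoOn u (Iio (c + 1))) :
    StrictMonoOn (skip u j) (Iio c) := by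
  intro p hp q hq hpq
  simp only [mem_Iio] at hp hq
  unfold GorensteinSI.skip
  split_ifs <;> exact hu (by simp only [mem_Iio]; omega) (by simp only [mem_Iio]; omega) (by omega)

theorem mapsTo_skip {U : Finset ℕ} (hu : StrictMonoOn u (Iio (c + 1)))
    (huU : MapsTo u (Iio (c + 1)) U) (hj : j ≤ c) :
    MapsTo (skip u j) (Iio c) (U.erase (u j)) := by
  intro p hp
  simp only [mem_Iio] at hp
  have mem (q : ℕ) (hq : q ≤ c) (hqj : q ≠ j) : u q ∈ U.erase (u j) :=
    Finset.mem_erase.2 ⟨fun h => hqj (hu.injOn (by simp only [mem_Iio]; omega)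
      (by simp only [mem_Iio]; omega) h), huU (by simp only [mem_Iio]; omega)⟩
  unfold GorensteinSI.skip
  split_ifs with h
  · exact mem p (by omega) (by omega)
  · exact mem (p + 1) (by omega) (by omega)

end skip

theorem strictMonoOn_nth_mem {c : ℕ} {U : Finset ℕ} (hU : U.card = c + 1) :
    StrictMonoOn (Nat.nth (· ∈ U)) (Iio (c + 1)) := by
  have hf : (Set.ofPred (· ∈ U)).Finite := U.finite_toSet
  simpa [show hf.toFinset = U by ext; simp, hU] using Nat.nth_strictMonoOn hf

theorem exists_eqOn_skip_nth {c : ℕ} {v : ℕ → ℕ} {U : Finset ℕ} (hU : U.card = c + 1)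
    (hv : StrictMonoOn v (Iio c)) (hvU : (Finset.range c).image v ⊆ U) :
    ∃ j ≤ c, (Finset.range c).image v = U.erase (Nat.nth (· ∈ U) j) ∧
      EqOn v (skip (Nat.nth (· ∈ U)) j) (Iio c) := by
  have hcard := card_image_range_of_strictMonoOn hv
  obtain ⟨x, hx, hins⟩ := Finset.exists_eq_insert_iff.2 ⟨hvU, by omega⟩
  have hS : (Finset.range c).image v = U.erase x := by rw [← hins, Finset.erase_insert hx]
  have hf : (Set.ofPred (· ∈ U)).Finite := U.finite_toSet
  have hfU : hf.toFinset.card = c + 1 := by rw [← hU]; congr; ext; simp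
  have hu := strictMonoOn_nth_mem hU
  have huU : MapsTo (Nat.nth (· ∈ U)) (Iio (c + 1)) U := fun q hq =>
    Nat.nth_mem_of_lt_card hf (hfU ▸ hq)
  obtain ⟨j, hj, rfl⟩ := Nat.exists_lt_card_finite_nth_eq hf (p := (· ∈ U))
    (hins ▸ Finset.mem_insert_self x _)
  refine ⟨j, by omega, hS, eqOn_of_strictMonoOn_of_mapsTo (E := U.erase _) ?_ hv
    (strictMonoOn_skip hu) (fun p hp => hS ▸ Finset.mem_image_of_mem v (by simpa using hp))
    (mapsTo_skip hu huU (by omega))⟩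
  rw [← hS, hcard]

theorem add_two_le_card_union {c s t : ℕ} {v₁ v₂ v₃ : ℕ → ℕ} (hc : 1 ≤ c)
    (hv₁ : StrictMonoOn v₁ (Iio c)) (hv₂ : StrictMonoOn v₂ (Iio c))
    (hv₃ : StrictMonoOn v₃ (Iio c)) (t₁ : IsType c s t v₁) (t₂ : IsType c s t v₂)
    (t₃ : IsType c s t v₃) (h₁₂ : (Finset.range c).image v₁ ≠ (Finset.range c).image v₂)
    (h₁₃ : (Finset.range c).image v₁ ≠ (Finset.range c).image v₃)
    (h₂₃ : (Finset.range c).image v₂ ≠ (Finset.range c).image v₃) :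
    c + 2 ≤ ((Finset.range c).image v₁ ∪ (Finset.range c).image v₂ ∪
      (Finset.range c).image v₃).card := by
  set U := (Finset.range c).image v₁ ∪ (Finset.range c).image v₂ ∪ (Finset.range c).image v₃
  have sub₁ : (Finset.range c).image v₁ ⊆ U := by grind
  have sub₂ : (Finset.range c).image v₂ ⊆ U := by grind
  have sub₃ : (Finset.range c).image v₃ ⊆ U := by grind
  by_contra! hlt
  have hU : U.card = c + 1 := by
    suffices c + 1 ≤ U.card by omega
    by_contra! hle
    have eq_U {v : ℕ → ℕ} (hv : StrictMonoOn v (Iio c)) (hvU : (Finset.range c).image v ⊆ U) :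
        (Finset.range c).image v = U :=
      Finset.eq_of_subset_of_card_le hvU (by rw [card_image_range_of_strictMonoOn hv]; omega)
    exact h₁₂ ((eq_U hv₁ sub₁).trans (eq_U hv₂ sub₂).symm)
  obtain ⟨j₁, hj₁, hS₁, e₁⟩ := exists_eqOn_skip_nth hU hv₁ sub₁
  obtain ⟨j₂, hj₂, hS₂, e₂⟩ := exists_eqOn_skip_nth hU hv₂ sub₂
  obtain ⟨j₃, hj₃, hS₃, e₃⟩ := exists_eqOn_skip_nth hU hv₃ sub₃
  exact not_isType_skip_three (strictMonoOn_nth_mem hU) hc hj₁ hj₂ hj₃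
    (fun h => h₁₂ (by rw [hS₁, hS₂, h])) (fun h => h₁₃ (by rw [hS₁, hS₃, h]))
    (fun h => h₂₃ (by rw [hS₂, hS₃, h]))
    (t₁.congr hc e₁) (t₂.congr hc e₂) (t₃.congr hc e₃)

theorem G_is_generalized_stick_figure_general {K : Type} [Field K] {n c s t : ℕ}
    (hc : 1 ≤ c) (hst : 2 * t ≤ s)
    (M L : ℕ → MvPolynomial (Fin (n + 1)) K)
    (hindep : ∀ S : Finset (ℕ ⊕ ℕ), (↑S ⊆ {x | validNcst c s t x}) → S.card ≤ c + 2 →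
      LinearIndependent K (fun j : S => Sum.elim M L j.1)) :
    ∀ (P₁ P₂ P₃ : Ideal (MvPolynomial (Fin (n + 1)) K))
      (G₁ G₂ G₃ : Set (MvPolynomial (Fin (n + 1)) K)),
      IsGComponent M L c s t P₁ G₁ → IsGComponent M L c s t P₂ G₂ →
      IsGComponent M L c s t P₃ G₃ →
      P₁ ≠ P₂ → P₁ ≠ P₃ → P₂ ≠ P₃ →
      c + 2 ≤ (G₁ ∪ G₂ ∪ G₃).ncard := by
  intro P₁ P₂ P₃ G₁ G₂ G₃ h₁ h₂ h₃ h₁₂ h₁₃ h₂₃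
  obtain ⟨v₁, hv₁, t₁, rfl, rfl⟩ := h₁.exists_labels hc
  obtain ⟨v₂, hv₂, t₂, rfl, rfl⟩ := h₂.exists_labels hc
  obtain ⟨v₃, hv₃, t₃, rfl, rfl⟩ := h₃.exists_labels hc
  have hinj : InjOn (labelForm M L)
      ↑((Finset.range c).image v₁ ∪ (Finset.range c).image v₂ ∪ (Finset.range c).image v₃) := by
    refine (injOn_of_linearIndependent_pair (K := K) fun S hS hS₂ => hindep S hS (by omega)).comp
      Equiv.natSumNatEquivNat.symm.injective.injOn fun x hx => ?_
    simp only [Finset.coe_union, Set.mem_union, Finset.mem_coe] at hx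
    rcases hx with (hx | hx) | hx
    exacts [t₁.validNcst hst hc hv₁ x hx, t₂.validNcst hst hc hv₂ x hx,
      t₃.validNcst hst hc hv₃ x hx]
  rw [← Set.image_union, ← Set.image_union, ← Finset.coe_union, ← Finset.coe_union,
    hinj.ncard_image, Set.ncard_coe_finset]
  exact add_two_le_card_union hc hv₁ hv₂ hv₃ t₁ t₂ t₃ (fun h => h₁₂ (by rw [h]))
    (fun h => h₁₃ (by rw [h])) (fun h => h₂₃ (by rw [h]))

/-- Theorem 4.4 (stick figure part): let `c ≥ 1`, `t ≥ 0`, `s ≥ 2t` and suppose every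
`(c+2)`-element subset of the `s+c` linear forms `N_{c,s,t}` is linearly independent.
Then `G_{c,s,t}` (whose defining intersection has the components of types `A`, `B`, `C`
resp. `A′`, `B′`, `C′`) is a generalized stick figure: among the `3c` generators of any
three pairwise distinct components at least `c+2` distinct linear forms occur
(equivalently, the sum of the three component ideals has height at least `c+2`). -/
theorem G_is_generalized_stick_figure {K : Type} [Field K] {n c s t : ℕ}
    (hc : 1 ≤ c) (hcn : c < n + 1) (hst : 2 * t ≤ s)
    (M L : ℕ → MvPolynomial (Fin (n + 1)) K)
    (hMlin : ∀ k : ℕ, (k : ℤ) ≤ (t : ℤ) + ((c : ℤ) - 1).fdiv 2 → (M k).IsHomogeneous 1)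
    (hLlin : ∀ k : ℕ, (k : ℤ) ≤ (s : ℤ) - (t : ℤ) + ((c : ℤ) - 2).fdiv 2 →
      (L k).IsHomogeneous 1)
    (hindep : ∀ S : Finset (ℕ ⊕ ℕ), (↑S ⊆ {x | validNcst c s t x}) → S.card ≤ c + 2 →
      LinearIndependent K (fun j : S => Sum.elim M L j.1)) :
    ∀ (P₁ P₂ P₃ : Ideal (MvPolynomial (Fin (n + 1)) K))
      (G₁ G₂ G₃ : Set (MvPolynomial (Fin (n + 1)) K)),
      IsGComponent M L c s t P₁ G₁ → IsGComponent M L c s t P₂ G₂ →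
      IsGComponent M L c s t P₃ G₃ →
      P₁ ≠ P₂ → P₁ ≠ P₃ → P₂ ≠ P₃ →
      c + 2 ≤ (G₁ ∪ G₂ ∪ G₃).ncard :=
  G_is_generalized_stick_figure_general hc hst M L hindep

end GorensteinSI
end

section
/- Fix integers c ≥ 1 and t ≥ 0 and let U = {u_1,…,u_{c+2t}}. A subset W ⊆ U equals β̄_{c,t}(m) for some monomial m of degree at most t in S = K[y_1,…,y_c] if and only if |W| = 2t and every maximal consecutive block of W has even cardinality (where W decomposes uniquely as a disjoint union of maximal consecutive subsets {u_i, u_{i+1}, …, u_j}). -/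
namespace GorensteinSI

/-- The prefix count `P(e)`: the number of factors of the monomial with exponent vector
`a` involving a variable of index smaller than `e` (counted with multiplicity). -/
def prefixCount {c : ℕ} (a : Fin c →₀ ℕ) (e : Fin c) : ℕ :=
  ∑ e' ∈ Finset.univ.filter (fun e' : Fin c => e' < e), a e'

/-- `β̄_{c,t}(m)` for a monomial `m = y_{e_1}⋯y_{e_k}` (with `1 ≤ e_1 ≤ ⋯ ≤ e_k ≤ c`)
of degree `k ≤ t`, identified with its exponent vector `a`:
`β̄_{c,t}(m) = {u_1,…,u_{2(t−k)}} ∪ ⋃_{j=1}^k {u_{e_j+2(j+t−k)−1}, u_{e_j+2(j+t−k)}}`,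
a `2t`-element subset of `U = {u_1,…,u_{c+2t}}` (the symbol `u_i` is encoded by the
natural number `i`).  The `j`-th factor of `m` (in weakly increasing order) using the
variable `y_{e}` corresponds to `j = P(e) + r + 1` with `0 ≤ r < a e`. -/
def betaBar {c : ℕ} (t : ℕ) (a : Fin c →₀ ℕ) : Set ℕ :=
  Set.Icc 1 (2 * (t - a.degree)) ∪
    {x | ∃ e : Fin c, ∃ r < a e,
      x = (e.1 + 1) + 2 * (prefixCount a e + r + 1 + t - a.degree) - 1 ∨
      x = (e.1 + 1) + 2 * (prefixCount a e + r + 1 + t - a.degree)}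

/-! ### Auxiliary lemmas -/

lemma degree_eq_sum_univ {c : ℕ} (a : Fin c →₀ ℕ) : a.degree = ∑ x, a x := by
  refine Finset.sum_subset (Finset.subset_univ _) ?_
  intro x _ hx
  simpa using (Finsupp.notMem_support_iff.mp hx)

lemma prefixCount_add_le {c : ℕ} (a : Fin c →₀ ℕ) (e : Fin c) :
    prefixCount a e + a e ≤ a.degree := by
  rw [degree_eq_sum_univ, prefixCount]
  have h : Finset.univ.filter (fun e' : Fin c => e' < e) ∪ {e} ⊆ Finset.univ :=
    Finset.subset_univ _
  have hd : Disjoint (Finset.univ.filter (fun e' : Fin c => e' < e)) ({e} : Finset (Fin c)) := by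
    simp [Finset.disjoint_singleton_right]
  calc (∑ e' ∈ Finset.univ.filter (fun e' : Fin c => e' < e), a e') + a e
      = ∑ e' ∈ Finset.univ.filter (fun e' : Fin c => e' < e) ∪ {e}, a e' := by
        rw [Finset.sum_union hd, Finset.sum_singleton]
    _ ≤ ∑ x, a x := Finset.sum_le_sum_of_subset h

lemma prefixCount_top {c : ℕ} (a : Fin c →₀ ℕ) (e : Fin c)
    (htop : ∀ e' ∈ a.support, e' ≤ e) :
    prefixCount a e + a e = a.degree := by
  rw [degree_eq_sum_univ, prefixCount]
  have h1 : ∑ x, a x = ∑ x ∈ Finset.univ.filter (fun e' : Fin c => e' ≤ e), a x := by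
    refine (Finset.sum_subset (Finset.filter_subset _ _) ?_).symm
    intro x _ hx
    simp only [Finset.mem_filter, Finset.mem_univ, true_and] at hx
    by_contra hax
    exact hx (htop x (Finsupp.mem_support_iff.mpr hax))
  have h2 : Finset.univ.filter (fun e' : Fin c => e' ≤ e) =
      insert e (Finset.univ.filter (fun e' : Fin c => e' < e)) := by
    ext x
    simp only [Finset.mem_filter, Finset.mem_univ, true_and, Finset.mem_insert]
    constructor
    · intro hx; rcases lt_or_eq_of_le hx with h | h
      · exact Or.inr h
      · exact Or.inl h
    · rintro (rfl | hx)
      · exact le_refl _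
      · exact le_of_lt hx
  rw [h1, h2, Finset.sum_insert (by simp)]
  ring

lemma one_le_of_mem_betaBar {c t : ℕ} {a : Fin c →₀ ℕ} (hk : a.degree ≤ t) {x : ℕ}
    (hx : x ∈ betaBar t a) : 1 ≤ x := by
  rcases hx with ⟨h1, _⟩ | ⟨e, r, hr, hx⟩
  · exact h1
  · have := prefixCount_add_le a e
    omega

lemma le_of_mem_betaBar {c t : ℕ} {a : Fin c →₀ ℕ} (hk : a.degree ≤ t) {E : ℕ}
    (htop : ∀ e' ∈ a.support, e'.1 ≤ E) {x : ℕ}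
    (hx : x ∈ betaBar t a) : x ≤ E + 1 + 2 * t := by
  rcases hx with ⟨_, h2⟩ | ⟨e, r, hr, hx⟩
  · omega
  · have h1 := prefixCount_add_le a e
    have h2 : e.1 ≤ E := htop e (Finsupp.mem_support_iff.mpr (by omega))
    omega

lemma betaBar_zero {c : ℕ} (t : ℕ) : betaBar t (0 : Fin c →₀ ℕ) = Set.Icc 1 (2 * t) := by
  ext x
  simp [betaBar]

lemma betaBar_finite {c t : ℕ} {a : Fin c →₀ ℕ} (hk : a.degree ≤ t) :
    (betaBar t a).Finite := by
  refine (Set.finite_Icc 1 (c + 1 + 2 * t)).subset (fun x hx => ?_)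
  exact ⟨one_le_of_mem_betaBar hk hx,
    le_of_mem_betaBar (E := c) hk (fun e' _ => e'.2.le) hx⟩

/-- The key structural step: removing the top factor of a monomial. -/
lemma betaBar_step {c : ℕ} (t : ℕ) (a : Fin c →₀ ℕ) (e : Fin c)
    (htop : ∀ e' ∈ a.support, e' ≤ e) (he : a e ≠ 0) (hk : a.degree ≤ t) :
    betaBar t a =
      betaBar (t - 1) (a - Finsupp.single e 1) ∪ {e.1 + 2 * t, e.1 + 1 + 2 * t} := by
  set a' : Fin c →₀ ℕ := a - Finsupp.single e 1 with ha'
  have happ : ∀ x, a' x = a x - (if x = e then 1 else 0) := by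
    intro x
    rw [ha', Finsupp.tsub_apply, Finsupp.single_apply]
    congr 1
    simp [eq_comm]
  have haeq : a = a' + Finsupp.single e 1 := by
    ext x
    rw [Finsupp.add_apply, happ x, Finsupp.single_apply]
    by_cases hx : x = e
    · subst hx; simp; omega
    · simp [hx, Ne.symm hx]
  have hdeg : a.degree = a'.degree + 1 := by
    rw [degree_eq_sum_univ, degree_eq_sum_univ, haeq]
    simp only [Finsupp.add_apply, Finset.sum_add_distrib]
    congr 1
    rw [Finset.sum_congr rfl (fun x _ => Finsupp.single_apply)]
    simp
  have hP : ∀ e'' : Fin c, e'' ≤ e → prefixCount a' e'' = prefixCount a e'' := by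
    intro e'' he''
    refine Finset.sum_congr rfl (fun x hx => ?_)
    simp only [Finset.mem_filter] at hx
    rw [happ]
    have : x ≠ e := by
      intro h; subst h; exact absurd (lt_of_lt_of_le hx.2 he'') (lt_irrefl x)
    simp [this]
  have hke : a e ≤ a.degree := Finsupp.le_degree e a
  have hptop : prefixCount a e + a e = a.degree := prefixCount_top a e htop
  ext x
  constructor
  · rintro (⟨h1, h2⟩ | ⟨e'', r, hr, hx⟩)
    · exact Or.inl (Or.inl ⟨h1, by omega⟩)
    · by_cases hee : e'' = e
      · subst hee
        by_cases hrtop : r = a e'' - 1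
        · subst hrtop
          right
          simp only [Set.mem_insert_iff, Set.mem_singleton_iff]
          omega
        · left; right
          refine ⟨e'', r, ?_, ?_⟩
          · rw [happ]; simp; omega
          · rw [hP e'' le_rfl]
            omega
      · have hmem : e'' ∈ a.support := Finsupp.mem_support_iff.mpr (by omega)
        have hle : e'' ≤ e := htop e'' hmem
        left; right
        refine ⟨e'', r, ?_, ?_⟩
        · rw [happ]; simp [hee]; omega
        · rw [hP e'' hle]
          omega
  · rintro ((⟨h1, h2⟩ | ⟨e'', r, hr, hx⟩) | hx)
    · exact Or.inl ⟨h1, by omega⟩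
    · have hr' : a' e'' ≤ a e'' := by rw [happ]; omega
      have hmem : e'' ∈ a.support := Finsupp.mem_support_iff.mpr (by omega)
      have hle : e'' ≤ e := htop e'' hmem
      right
      refine ⟨e'', r, by omega, ?_⟩
      rw [hP e'' hle] at hx
      omega
    · simp only [Set.mem_insert_iff, Set.mem_singleton_iff] at hx
      right
      refine ⟨e, a e - 1, by omega, ?_⟩
      omega

/-- The right-hand side condition. -/
def Good (W : Set ℕ) (t : ℕ) : Prop :=
  W.ncard = 2 * t ∧
    ∀ p q : ℕ, p ≤ q → Set.Icc p q ⊆ W → p - 1 ∉ W → q + 1 ∉ W → Even (q + 1 - p)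

lemma good_Icc (t : ℕ) : Good (Set.Icc 1 (2 * t)) t := by
  constructor
  · rw [Set.ncard_eq_toFinset_card', Set.toFinset_Icc, Nat.card_Icc]
    omega
  · intro p q hpq hsub hp hq
    have hpW : p ∈ Set.Icc 1 (2 * t) := hsub ⟨le_rfl, hpq⟩
    have hqW : q ∈ Set.Icc 1 (2 * t) := hsub ⟨hpq, le_rfl⟩
    simp only [Set.mem_Icc, not_and, not_le] at hp hq hpW hqW
    have hp1 : p = 1 := by omega
    have hq1 : q = 2 * t := by omega
    subst hp1 hq1
    simpa using even_two_mul t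

lemma good_union {W : Set ℕ} {t m : ℕ} (hfin : W.Finite) (hb : ∀ x ∈ W, x < m)
    (hg : Good W t) : Good (W ∪ {m, m + 1}) (t + 1) := by
  obtain ⟨hcard, hblocks⟩ := hg
  have hmW : m ∉ W := fun h => lt_irrefl m (hb m h)
  have hm1W : m + 1 ∉ W := fun h => by have := hb _ h; omega
  constructor
  · rw [Set.ncard_union_eq ?_ hfin ((Set.finite_singleton _).insert _),
      hcard, Set.ncard_pair (by omega : m ≠ m + 1)]
    · ring
    · rw [Set.disjoint_right]
      rintro x (rfl | rfl) <;> assumption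
  · intro p q hpq hsub hp hq
    simp only [Set.mem_union, Set.mem_insert_iff, Set.mem_singleton_iff, not_or] at hp hq
    by_cases hqm : q < m
    · have hsub' : Set.Icc p q ⊆ W := by
        intro x hx
        rcases hsub hx with h | h
        · exact h
        · simp only [Set.mem_insert_iff, Set.mem_singleton_iff] at h
          have := hx.2; omega
      exact hblocks p q hpq hsub' hp.1 hq.1
    · push_neg at hqm
      have hqmem := hsub ⟨hpq, le_rfl⟩
      have hq' : q = m + 1 := by
        rcases hqmem with h | h
        · exact absurd (hb q h) (by omega)
        · simp only [Set.mem_insert_iff, Set.mem_singleton_iff] at h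
          have h1 := hq.2.1
          have h2 := hq.2.2
          omega
      subst hq'
      by_cases hpm : m ≤ p
      · have hp' : p = m := by
          have h1 := hp.2.1
          omega
        rw [show m + 1 + 1 - p = 2 by omega]
        exact even_two
      · push_neg at hpm
        have hsub' : Set.Icc p (m - 1) ⊆ W := by
          intro x hx
          have hx' : x ∈ Set.Icc p (m + 1) := ⟨hx.1, le_trans hx.2 (by omega)⟩
          rcases hsub hx' with h | h
          · exact h
          · simp only [Set.mem_insert_iff, Set.mem_singleton_iff] at h
            have := hx.2; omega
        have hev := hblocks p (m - 1) (by omega) hsub' hp.1 ?_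
        · have h1 : m - 1 + 1 - p = m - p := by omega
          rw [h1] at hev
          have h2 : m + 1 + 1 - p = (m - p) + 2 := by omega
          rw [h2]
          exact hev.add even_two
        · rw [show m - 1 + 1 = m by omega]
          exact hmW

lemma good_strip {W : Set ℕ} {t q : ℕ} (hfin : W.Finite)
    (hq : q ∈ W) (hmax : ∀ x ∈ W, x ≤ q) (hq1 : q - 1 ∈ W) (hq2 : 2 ≤ q)
    (hg : Good W (t + 1)) : Good (W \ {q - 1, q}) t := by
  obtain ⟨hcard, hblocks⟩ := hg
  constructor
  · rw [Set.ncard_diff ?_ (((Set.finite_singleton _).insert _)),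
      hcard, Set.ncard_pair (by omega : q - 1 ≠ q)]
    · omega
    · rintro x (rfl | rfl)
      · exact hq1
      · exact hq
  · intro p' q' hpq hsub hp hq'
    have hq'q : q' ≤ q - 2 := by
      have h := hsub ⟨hpq, le_rfl⟩
      simp only [Set.mem_diff, Set.mem_insert_iff, Set.mem_singleton_iff, not_or] at h
      have := hmax q' h.1
      omega
    have hsubW : Set.Icc p' q' ⊆ W := fun x hx => (hsub hx).1
    have hpW : p' - 1 ∉ W := by
      intro h
      refine hp ⟨h, ?_⟩
      simp only [Set.mem_insert_iff, Set.mem_singleton_iff, not_or]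
      omega
    by_cases hcase : q' + 1 = q - 1 ∧ q - 1 ∈ W
    · -- the block of W is [p', q]
      have hsubW2 : Set.Icc p' q ⊆ W := by
        intro x hx
        rcases Nat.lt_or_ge x (q - 1) with h | h
        · exact hsubW ⟨hx.1, by omega⟩
        · rcases Nat.eq_or_lt_of_le h with h2 | h2
          · rw [← h2]; exact hq1
          · have : x = q := by have := hx.2; omega
            rw [this]; exact hq
      have hqW : q + 1 ∉ W := fun h => by have := hmax _ h; omega
      have hev := hblocks p' q (by omega) hsubW2 hpW hqW
      have : q' + 1 - p' = (q + 1 - p') - 2 := by omega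
      rw [this]
      rcases hev with ⟨k, hk⟩
      exact ⟨k - 1, by omega⟩
    · have hq'W : q' + 1 ∉ W := by
        intro h
        by_cases h2 : q' + 1 = q - 1
        · exact hcase ⟨h2, h2 ▸ h⟩
        · refine hq' ⟨h, ?_⟩
          simp only [Set.mem_insert_iff, Set.mem_singleton_iff, not_or]
          omega
      exact hblocks p' q' hpq hsubW hpW hq'W

lemma degree_add_single {c : ℕ} (a : Fin c →₀ ℕ) (e : Fin c) :
    (a + Finsupp.single e 1).degree = a.degree + 1 := by
  rw [degree_eq_sum_univ, degree_eq_sum_univ]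
  simp only [Finsupp.add_apply, Finset.sum_add_distrib]
  congr 1
  rw [Finset.sum_congr rfl (fun x _ => Finsupp.single_apply)]
  simp

lemma top_mem_betaBar {c t : ℕ} {a : Fin c →₀ ℕ} {e : Fin c}
    (htop : ∀ e' ∈ a.support, e' ≤ e) (he : a e ≠ 0) (hk : a.degree ≤ t) :
    e.1 + 1 + 2 * t ∈ betaBar t a := by
  have hP := prefixCount_top a e htop
  exact Or.inr ⟨e, a e - 1, by omega, Or.inr (by omega)⟩

lemma good_betaBar {c : ℕ} :
    ∀ (n t : ℕ) (a : Fin c →₀ ℕ), a.degree = n → a.degree ≤ t → Good (betaBar t a) t := by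
  intro n
  induction n with
  | zero =>
    intro t a hdeg _
    rw [(Finsupp.degree_eq_zero_iff a).mp hdeg, betaBar_zero]
    exact good_Icc t
  | succ n ih =>
    intro t a hdeg hk
    have hne : a.support.Nonempty := by
      by_contra h
      rw [Finset.not_nonempty_iff_eq_empty] at h
      have : a = 0 := Finsupp.support_eq_empty.mp h
      rw [this] at hdeg
      simp [map_zero] at hdeg
    set e := a.support.max' hne with he_def
    have htop : ∀ e' ∈ a.support, e' ≤ e := fun e' h => Finset.le_max' _ _ h
    have he : a e ≠ 0 := Finsupp.mem_support_iff.mp (a.support.max'_mem hne)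
    have ht1 : 1 ≤ t := by omega
    set a' := a - Finsupp.single e 1 with ha'
    have happ : ∀ x, a' x = a x - (if x = e then 1 else 0) := by
      intro x
      rw [ha', Finsupp.tsub_apply, Finsupp.single_apply]
      congr 1
      simp [eq_comm]
    have haeq : a = a' + Finsupp.single e 1 := by
      ext x
      rw [Finsupp.add_apply, happ x, Finsupp.single_apply]
      by_cases hx : x = e
      · subst hx; simp; omega
      · simp [hx, Ne.symm hx]
    have hdeg' : a'.degree = n := by
      have := degree_add_single a' e
      rw [← haeq] at this
      omega
    have hsup' : ∀ e' ∈ a'.support, e' ≤ e := by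
      intro e' h
      refine htop e' (Finsupp.mem_support_iff.mpr ?_)
      have := Finsupp.mem_support_iff.mp h
      rw [happ] at this
      omega
    have hstep := betaBar_step t a e htop he hk
    have hb : ∀ x ∈ betaBar (t - 1) a', x < e.1 + 2 * t := by
      intro x hx
      have := le_of_mem_betaBar (E := e.1) (by omega) (fun e'' h => hsup' e'' h) hx
      omega
    have hgu := good_union (betaBar_finite (by omega : a'.degree ≤ t - 1)) hb
      (ih (t - 1) a' hdeg' (by omega))
    rw [show t - 1 + 1 = t by omega] at hgu
    rw [hstep, show e.1 + 1 + 2 * t = e.1 + 2 * t + 1 by ring]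
    exact hgu

lemma exists_of_good {c : ℕ} (hc : 1 ≤ c) :
    ∀ (t : ℕ) (W : Set ℕ), W ⊆ Set.Icc 1 (c + 2 * t) → Good W t →
      ∃ a : Fin c →₀ ℕ, a.degree ≤ t ∧ W = betaBar t a := by
  intro t
  induction t with
  | zero =>
    intro W hW hg
    refine ⟨0, le_rfl, ?_⟩
    have hfin : W.Finite := (Set.finite_Icc _ _).subset hW
    have : W = ∅ := (Set.ncard_eq_zero hfin).mp (by simpa using hg.1)
    rw [this, betaBar_zero]
    simp
  | succ t ih =>
    intro W hW hg
    classical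
    have hfin : W.Finite := (Set.finite_Icc _ _).subset hW
    have hne : W.Nonempty := by
      rcases Set.eq_empty_or_nonempty W with h | h
      · exfalso; rw [h] at hg; have := hg.1; simp at this
      · exact h
    obtain ⟨q, hqW, hmax⟩ := Set.exists_max_image W id hfin hne
    simp only [id] at hmax
    have hq1 : 1 ≤ q := (hW hqW).1
    have hq2 : q ≤ c + 2 * (t + 1) := (hW hqW).2
    have hWq : W ⊆ Set.Icc 1 q := fun x hx => ⟨(hW hx).1, hmax x hx⟩
    have hqge : 2 * (t + 1) ≤ q := by
      have h1 : W.ncard ≤ (Set.Icc 1 q).ncard := Set.ncard_le_ncard hWq (Set.finite_Icc _ _)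
      have h2 : (Set.Icc 1 q).ncard = q := by
        rw [Set.ncard_eq_toFinset_card', Set.toFinset_Icc, Nat.card_Icc]; omega
      rw [hg.1] at h1; omega
    rcases Nat.eq_or_lt_of_le hqge with hq | hq
    · -- q = 2(t+1): W is the full interval
      refine ⟨0, by simp [map_zero], ?_⟩
      rw [betaBar_zero]
      have h2 : (Set.Icc 1 q).ncard = q := by
        rw [Set.ncard_eq_toFinset_card', Set.toFinset_Icc, Nat.card_Icc]; omega
      have := Set.eq_of_subset_of_ncard_le hWq (by rw [h2, hg.1, hq]) (Set.finite_Icc _ _)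
      rw [this, ← hq]
    · -- q > 2(t+1)
      have hex : ∃ p, Set.Icc p q ⊆ W := ⟨q, by intro x hx; have : x = q := le_antisymm hx.2 hx.1; rw [this]; exact hqW⟩
      set p := Nat.find hex with hp_def
      have hpsub : Set.Icc p q ⊆ W := Nat.find_spec hex
      have hpq : p ≤ q := Nat.find_min' hex (by intro x hx; have : x = q := le_antisymm hx.2 hx.1; rw [this]; exact hqW)
      have hp1 : p - 1 ∉ W := by
        intro h
        have hpos : 1 ≤ p := by
          by_contra h0
          have : p = 0 := by omega
          rw [this] at h
          simp at h
          exact absurd (hW h).1 (by omega)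
        have : Set.Icc (p - 1) q ⊆ W := by
          intro x hx
          rcases Nat.eq_or_lt_of_le hx.1 with h2 | h2
          · rw [← h2]; exact h
          · exact hpsub ⟨by omega, hx.2⟩
        exact Nat.find_min hex (by omega : p - 1 < p) this
      have hq1' : q + 1 ∉ W := fun h => by have := hmax _ h; omega
      have hev := hg.2 p q hpq hpsub hp1 hq1'
      have hge2 : 2 ≤ q + 1 - p := by
        rcases hev with ⟨k, hk⟩
        omega
      have hq1W : q - 1 ∈ W := hpsub ⟨by omega, by omega⟩
      set W' := W \ {q - 1, q} with hW'_def
      have hgood' : Good W' t := good_strip hfin hqW hmax hq1W (by omega) hg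
      have hW'sub : W' ⊆ Set.Icc 1 (c + 2 * t) := by
        intro x hx
        obtain ⟨hxW, hxne⟩ := hx
        simp only [Set.mem_insert_iff, Set.mem_singleton_iff, not_or] at hxne
        have := hmax x hxW
        exact ⟨(hW hxW).1, by omega⟩
      obtain ⟨a', ha't, hW'⟩ := ih W' hW'sub hgood'
      have heb : q - 2 * (t + 1) - 1 < c := by omega
      set e : Fin c := ⟨q - 2 * (t + 1) - 1, heb⟩ with he_def
      set a := a' + Finsupp.single e 1 with ha_def
      have hdeg : a.degree = a'.degree + 1 := degree_add_single a' e
      have htop : ∀ e'' ∈ a.support, e'' ≤ e := by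
        intro e'' h
        have h2 : e'' ∈ a'.support ∪ {e} := by
          have h3 := Finsupp.support_add (g₁ := a') (g₂ := Finsupp.single e 1) h
          rcases Finset.mem_union.mp h3 with h4 | h4
          · exact Finset.mem_union_left _ h4
          · exact Finset.mem_union_right _ (Finsupp.support_single_subset h4)
        rcases Finset.mem_union.mp h2 with h4 | h4
        · -- e'' in support of a'
          have hne' : a'.support.Nonempty := ⟨e'', h4⟩
          set es := a'.support.max' hne' with hes
          have htops : ∀ x ∈ a'.support, x ≤ es := fun x hx => Finset.le_max' _ _ hx
          have hmemtop : es.1 + 1 + 2 * t ∈ betaBar t a' :=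
            top_mem_betaBar htops (Finsupp.mem_support_iff.mp (a'.support.max'_mem hne')) ha't
          rw [← hW'] at hmemtop
          obtain ⟨hmW, hmne⟩ := hmemtop
          simp only [Set.mem_insert_iff, Set.mem_singleton_iff, not_or] at hmne
          have h5 := hmax _ hmW
          have h6 : es.1 ≤ e.1 := by
            rw [he_def]
            simp only
            omega
          exact le_trans (htops e'' h4) (by rwa [Fin.le_def])
        · rw [Finset.mem_singleton] at h4
          exact le_of_eq h4
      have he0 : a e ≠ 0 := by
        rw [ha_def, Finsupp.add_apply, Finsupp.single_apply]
        simp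
      have hsub1 : a - Finsupp.single e 1 = a' := by
        ext x
        rw [Finsupp.tsub_apply, ha_def, Finsupp.add_apply]
        omega
      have hstep := betaBar_step (t + 1) a e htop he0 (by omega)
      rw [show t + 1 - 1 = t by omega, hsub1] at hstep
      refine ⟨a, by omega, ?_⟩
      rw [hstep, ← hW']
      have hq1e : e.1 + 2 * (t + 1) = q - 1 := by rw [he_def]; simp only; omega
      have hq2e : e.1 + 1 + 2 * (t + 1) = q := by rw [he_def]; simp only; omega
      rw [hq1e, hq2e, hW'_def]
      rw [Set.diff_union_of_subset]
      rintro x (rfl | rfl)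
      · exact hq1W
      · exact hqW

/-- The "observation" in the proof of Theorem 6.3:  a subset `W` of
`U = {u_1,…,u_{c+2t}}` has the form `β̄_{c,t}(m)` for some monomial `m` of degree at
most `t` in `S = K[y_1,…,y_c]` if and only if `|W| = 2t` and every maximal consecutive
block of `W` has even cardinality. -/
theorem betaBar_characterization (c t : ℕ) (hc : 1 ≤ c) (W : Set ℕ)
    (hW : W ⊆ Set.Icc 1 (c + 2 * t)) :
    (∃ a : Fin c →₀ ℕ, a.degree ≤ t ∧ W = betaBar t a) ↔
      (W.ncard = 2 * t ∧
        ∀ p q : ℕ, p ≤ q → Set.Icc p q ⊆ W → p - 1 ∉ W → q + 1 ∉ W →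
          Even (q + 1 - p)) := by
  constructor
  · rintro ⟨a, ht, rfl⟩
    exact good_betaBar a.degree t a rfl ht
  · intro h
    exact exists_of_good hc t W hW h

end GorensteinSI
end
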